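/- Suppose π ≥ 1/2 and x ≤ 1−x′ ≤ 1/2 (i.e. P(A=a|C=c) ≤ P(A=ā|C=c̄) ≤ 1/2). If y₁ − y₂ ≥ y₄ − y₃ ≥ 0, then RD_crude ≤ RD_true; and if y₁ − y₂ ≤ y₄ − y₃ ≤ 0, then RD_crude ≥ RD_true. (Paper's Theorem 12.) -/

import Mathlib

/-!
Writing `P(c|a) - π` and `P(c|ā) - π` as `π(1-π)(x - x')/D₁` and `π(1-π)(x' - x)/D₂`,
where `D₁ = P(a)` and `D₂ = P(ā)`, the hypotheses give `x ≤ x'` and `D₁ ≤ D₂`; hence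
`P(c|a) - π ≤ 0` and the two shifts sum to something `≤ 0`. Since
`RD_crude - RD_true = (y₁ - y₂)(P(c|a) - π) + (y₄ - y₃)(P(c|ā) - π)`, the sign follows once
the larger coefficient `y₁ - y₂` sits on the nonpositive shift.
-/

/-- Bayes' posterior `P(c | A)` from the prior `p = P(c)` and the likelihoods
`a = P(A | c)`, `b = P(A | c̄)`. -/
noncomputable def posterior (p a b : ℝ) : ℝ := a * p / (a * p + b * (1 - p))

section Posterior

variable {p a b : ℝ}

theorem posterior_sub_prior (h : a * p + b * (1 - p) ≠ 0) :
    posterior p a b - p = p * (1 - p) * (a - b) / (a * p + b * (1 - p)) := by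
  unfold posterior
  field_simp
  ring

theorem posterior_le_prior (hp0 : 0 ≤ p) (hp1 : p ≤ 1) (hD : 0 < a * p + b * (1 - p))
    (hab : a ≤ b) : posterior p a b ≤ p := by
  have hk : 0 ≤ p * (1 - p) := mul_nonneg hp0 (by linarith)
  have := posterior_sub_prior hD.ne'
  have : p * (1 - p) * (a - b) / (a * p + b * (1 - p)) ≤ 0 :=
    div_nonpos_of_nonpos_of_nonneg (mul_nonpos_of_nonneg_of_nonpos hk (by linarith)) hD.le
  linarith

theorem mixture_le_mixture_compl (hp : 1 / 2 ≤ p) (hb : 1 - b ≤ 1 / 2) (hab : a ≤ 1 - b) :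
    a * p + b * (1 - p) ≤ (1 - a) * p + (1 - b) * (1 - p) := by
  nlinarith [mul_nonneg (by linarith : (0 : ℝ) ≤ 2 * p - 1) (by linarith : (0 : ℝ) ≤ 2 * b - 1)]

theorem posterior_add_posterior_compl_le (hp0 : 0 ≤ p) (hp1 : p ≤ 1)
    (hD : 0 < a * p + b * (1 - p))
    (hDD : a * p + b * (1 - p) ≤ (1 - a) * p + (1 - b) * (1 - p)) (hab : a ≤ b) :
    posterior p a b + posterior p (1 - a) (1 - b) ≤ 2 * p := by
  have hk : 0 ≤ p * (1 - p) * (b - a) := mul_nonneg (mul_nonneg hp0 (by linarith)) (by linarith)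
  have h₁ := posterior_sub_prior hD.ne'
  have h₂ := posterior_sub_prior (hD.trans_le hDD).ne'
  rw [show 1 - a - (1 - b) = b - a by ring] at h₂
  rw [show p * (1 - p) * (a - b) = -(p * (1 - p) * (b - a)) by ring, neg_div] at h₁
  have := div_le_div_of_nonneg_left hk hD hDD
  linarith

end Posterior

theorem mul_add_mul_nonpos_of_le {u v A B : ℝ} (huv : v ≤ u) (hv : 0 ≤ v) (hA : A ≤ 0)
    (hAB : A + B ≤ 0) : u * A + v * B ≤ 0 := by
  rw [show u * A + v * B = (u - v) * A + v * (A + B) by ring]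
  exact add_nonpos (mul_nonpos_of_nonneg_of_nonpos (sub_nonneg.2 huv) hA)
    (mul_nonpos_of_nonneg_of_nonpos hv hAB)

theorem thm12_general (pc x x' : ℝ) (y₁ y₂ y₃ y₄ : ℝ)
    (hpc1 : pc < 1)
    (hx0 : 0 < x)
    (hpcge : pc ≥ 1/2) (hxx' : x ≤ 1 - x') (hx'le : 1 - x' ≤ 1/2)
    (Pca Pcab RDtrue RDcrude : ℝ)
    (hPca : Pca = x*pc/(x*pc + x'*(1-pc)))
    (hPcab : Pcab = (1-x)*pc/((1-x)*pc + (1-x')*(1-pc)))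
    (hRDtrue : RDtrue = (y₁-y₃)*pc + (y₂-y₄)*(1-pc))
    (hRDcrude : RDcrude = (y₁*Pca + y₂*(1-Pca)) - (y₃*Pcab + y₄*(1-Pcab))) :
    (y₁ - y₂ ≥ y₄ - y₃ ∧ y₄ - y₃ ≥ 0 → RDcrude ≤ RDtrue) ∧
    (y₁ - y₂ ≤ y₄ - y₃ ∧ y₄ - y₃ ≤ 0 → RDcrude ≥ RDtrue) := by
  change Pca = posterior pc x x' at hPca
  change Pcab = posterior pc (1 - x) (1 - x') at hPcab
  have hxx : x ≤ x' := by linarith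
  have hD : 0 < x * pc + x' * (1 - pc) :=
    add_pos_of_pos_of_nonneg (mul_pos hx0 (by linarith)) (mul_nonneg (by linarith) (by linarith))
  have hA : Pca - pc ≤ 0 := by
    rw [hPca]; linarith [posterior_le_prior (by linarith) hpc1.le hD hxx]
  have hAB : (Pca - pc) + (Pcab - pc) ≤ 0 := by
    rw [hPca, hPcab]
    linarith [posterior_add_posterior_compl_le (by linarith) hpc1.le hD
      (mixture_le_mixture_compl hpcge hx'le hxx') hxx]
  have hbias : RDcrude - RDtrue = (y₁ - y₂) * (Pca - pc) + (y₄ - y₃) * (Pcab - pc) := by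
    rw [hRDcrude, hRDtrue]; ring
  constructor
  · rintro ⟨h₁₂, h₄₃⟩
    linarith [mul_add_mul_nonpos_of_le h₁₂ h₄₃ hA hAB]
  · rintro ⟨h₁₂, h₄₃⟩
    have := mul_add_mul_nonpos_of_le (neg_le_neg h₁₂) (neg_nonneg.2 h₄₃) hA hAB
    linarith

theorem thm12 (pc x x' : ℝ) (y₁ y₂ y₃ y₄ : ℝ)
    (hpc : 0 < pc) (hpc1 : pc < 1)
    (hx0 : 0 < x) (hx1 : x < 1) (hx'0 : 0 < x') (hx'1 : x' < 1)
    (hpcge : pc ≥ 1/2) (hxx' : x ≤ 1 - x') (hx'le : 1 - x' ≤ 1/2)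
    (Pca Pcab RDtrue RDcrude : ℝ)
    (hPca : Pca = x*pc/(x*pc + x'*(1-pc)))
    (hPcab : Pcab = (1-x)*pc/((1-x)*pc + (1-x')*(1-pc)))
    (hRDtrue : RDtrue = (y₁-y₃)*pc + (y₂-y₄)*(1-pc))
    (hRDcrude : RDcrude = (y₁*Pca + y₂*(1-Pca)) - (y₃*Pcab + y₄*(1-Pcab))) :
    (y₁ - y₂ ≥ y₄ - y₃ ∧ y₄ - y₃ ≥ 0 → RDcrude ≤ RDtrue) ∧
    (y₁ - y₂ ≤ y₄ - y₃ ∧ y₄ - y₃ ≤ 0 → RDcrude ≥ RDtrue) :=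
  thm12_general pc x x' y₁ y₂ y₃ y₄ hpc1 hx0 hpcge hxx' hx'le Pca Pcab RDtrue RDcrude hPca hPcab
    hRDtrue hRDcrude
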